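/- Let $L \subseteq \overline{\mathbb{Q}}$ be a totally imaginary number field and $\Phi$ a CM-type of $L$ lifted from a CM-subfield $K$ with CM-type $\Phi_K$. For $\tau \in G_{\mathbb{Q}}$, the set $\tau\Phi = \{\tau \circ \sigma : \sigma \in \Phi\}$ is again a CM-type of $L$ lifted from a CM-subfield (namely the lift of the CM-type $\tau\Phi_K$ of $K$), and for all $\tau_1, \tau_2 \in G_{\mathbb{Q}}$ one has the cocycle relation $\mathrm{tr}_{L,\Phi}(\tau_1\tau_2) = \mathrm{tr}_{L,\tau_2\Phi}(\tau_1) \cdot \mathrm{tr}_{L,\Phi}(\tau_2)$ in $G_L^{\mathrm{ab}}$. -/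

import Mathlib

/-!
STATEMENT 3: Let `L ⊆ ℚ̄` be a totally imaginary number field and `Φ` a CM-type of `L`
lifted from a CM-subfield `K` with CM-type `Φ_K`.  For `τ ∈ G_ℚ`, the set
`τΦ = {τ∘σ : σ ∈ Φ}` is again a CM-type of `L` lifted from a CM-subfield (namely the
lift of the CM-type `τΦ_K` of `K`), and for all `τ₁, τ₂ ∈ G_ℚ` the type transfer
satisfies the cocycle relation
`tr_{L,Φ}(τ₁τ₂) = tr_{L,τ₂Φ}(τ₁) ⬝ tr_{L,Φ}(τ₂)` in `G_L^{ab}`.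

The type transfer `tr_{L,Ψ}(τ) = ∏_{σ ∈ Ψ} (w_{τ∘σ}⁻¹ τ w_σ)⁻¹ mod G_L^c` is computed
with respect to a system of lifts `(w_σ)`; it is independent of this choice.
`G_L = Gal(ℚ̄/L)` with the Krull topology, `G_L^c` is the topological closure of its
commutator subgroup and `G_L^{ab} = G_L / G_L^c`.  `ℚ̄` is an algebraic closure of `ℚ`
with an embedding `emb` into `ℂ`, and `c` is complex conjugation restricted to `ℚ̄`.
-/

open scoped Classical

variable {Qbar : Type*} [Field Qbar] [Algebra ℚ Qbar]

/-- the action of `Gal(ℚ̄/ℚ)` on embeddings `F ↪ ℚ̄`, by composition -/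
def gact {F : IntermediateField ℚ Qbar} (τ : Qbar ≃ₐ[ℚ] Qbar) (σ : ↥F →+* Qbar) :
    ↥F →+* Qbar :=
  (τ : Qbar →ₐ[ℚ] Qbar).toRingHom.comp σ

section CM

variable (c : Qbar ≃ₐ[ℚ] Qbar)

/-- `K` is a CM-field. -/
def IsCMField (K : IntermediateField ℚ Qbar) : Prop :=
  ∃ cK : ↥K ≃+* ↥K, cK ≠ RingEquiv.refl ↥K ∧
    ∀ (σ : ↥K →+* Qbar) (x : ↥K), σ (cK x) = c (σ x)

/-- `Φ` is a CM-type of `K`. -/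
def IsCMType {K : IntermediateField ℚ Qbar} (Φ : Set (↥K →+* Qbar)) : Prop :=
  Φ ∩ (gact c '' Φ) = ∅ ∧ Φ ∪ (gact c '' Φ) = Set.univ

/-- the inclusion `K → L` of intermediate fields, as a ring homomorphism -/
def incl {K L : IntermediateField ℚ Qbar} (hKL : K ≤ L) : ↥K →+* ↥L where
  toFun x := ⟨x.1, hKL x.2⟩
  map_one' := rfl
  map_mul' _ _ := rfl
  map_zero' := rfl
  map_add' _ _ := rfl

/-- the lift to `L` of a set of embeddings of a subfield `K ⊆ L` -/
def liftType {K L : IntermediateField ℚ Qbar} (hKL : K ≤ L)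
    (ΦK : Set (↥K →+* Qbar)) : Set (↥L →+* Qbar) :=
  {σ | σ.comp (incl hKL) ∈ ΦK}

/-- `Φ` is a CM-type of `L` lifted from a CM-subfield of `L`. -/
def IsLiftedCMType (L : IntermediateField ℚ Qbar) (Φ : Set (↥L →+* Qbar)) : Prop :=
  ∃ (K : IntermediateField ℚ Qbar) (hKL : K ≤ L) (ΦK : Set (↥K →+* Qbar)),
    IsCMField c K ∧ IsCMType c ΦK ∧ Φ = liftType hKL ΦK

/-- `L` is totally imaginary. -/
def TotallyImaginary (L : IntermediateField ℚ Qbar) : Prop :=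
  ∀ σ : ↥L →+* Qbar, gact c σ ≠ σ

/-- a system of lifts for `L`: `w_σ|_L = σ` and `c ∘ w_σ = w_{c∘σ}` -/
def IsLiftSystem (L : IntermediateField ℚ Qbar)
    (w : (↥L →+* Qbar) → (Qbar ≃ₐ[ℚ] Qbar)) : Prop :=
  (∀ (σ : ↥L →+* Qbar) (x : ↥L), w σ (x : Qbar) = σ x) ∧
  (∀ σ : ↥L →+* Qbar, c * w σ = w (gact c σ))

end CM

/-- (a): `w_{τ∘σ}⁻¹ τ w_σ` fixes `L` pointwise. -/
theorem conj_mem_fixingSubgroup {L : IntermediateField ℚ Qbar}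
    (w : (↥L →+* Qbar) → (Qbar ≃ₐ[ℚ] Qbar))
    (hw : ∀ (σ : ↥L →+* Qbar) (x : ↥L), w σ (x : Qbar) = σ x)
    (τ : Qbar ≃ₐ[ℚ] Qbar) (σ : ↥L →+* Qbar) :
    (w (gact τ σ))⁻¹ * τ * w σ ∈ L.fixingSubgroup := by
  rw [IntermediateField.mem_fixingSubgroup_iff]
  intro x hx
  have h1 : w σ x = σ ⟨x, hx⟩ := hw σ ⟨x, hx⟩
  have h2 : τ (σ ⟨x, hx⟩) = gact τ σ ⟨x, hx⟩ := rfl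
  have h3 : w (gact τ σ) x = gact τ σ ⟨x, hx⟩ := hw (gact τ σ) ⟨x, hx⟩
  calc ((w (gact τ σ))⁻¹ * τ * w σ) x
      = (w (gact τ σ))⁻¹ (τ (w σ x)) := rfl
    _ = (w (gact τ σ))⁻¹ (w (gact τ σ) x) := by rw [h1, h2, ← h3]
    _ = x := by
        rw [show ((w (gact τ σ))⁻¹ : Qbar ≃ₐ[ℚ] Qbar) ((w (gact τ σ)) x)
              = ((w (gact τ σ))⁻¹ * (w (gact τ σ))) x from rfl, inv_mul_cancel]
        rfl

/-- `G_L^c`: the topological closure of the commutator subgroup of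
`G_L = Gal(ℚ̄/L)` (Krull topology). -/
noncomputable def Gc (L : IntermediateField ℚ Qbar) : Subgroup ↥(L.fixingSubgroup) :=
  (commutator ↥(L.fixingSubgroup)).topologicalClosure

instance (L : IntermediateField ℚ Qbar) : (Gc L).Normal :=
  Subgroup.is_normal_topologicalClosure _

/-- `G_L^{ab} = G_L / G_L^c` -/
noncomputable def Gab (L : IntermediateField ℚ Qbar) : Type _ :=
  ↥(L.fixingSubgroup) ⧸ Gc L

noncomputable instance (L : IntermediateField ℚ Qbar) : Group (Gab L) :=
  inferInstanceAs (Group (↥(L.fixingSubgroup) ⧸ Gc L))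

noncomputable instance (L : IntermediateField ℚ Qbar) : TopologicalSpace (Gab L) :=
  inferInstanceAs (TopologicalSpace (↥(L.fixingSubgroup) ⧸ Gc L))

open scoped commutatorElement in
/-- the quotient of a group by a normal subgroup containing the commutator subgroup is
commutative -/
noncomputable def commGroupQuotientOf {G : Type*} [Group G] (N : Subgroup G) [N.Normal]
    (h : commutator G ≤ N) : CommGroup (G ⧸ N) :=
  { (inferInstance : Group (G ⧸ N)) with
    mul_comm := by
      intro a b
      induction a using QuotientGroup.induction_on with | _ x => ?_
      induction b using QuotientGroup.induction_on with | _ y => ?_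
      rw [← QuotientGroup.mk_mul, ← QuotientGroup.mk_mul, QuotientGroup.eq]
      have hmem : ⁅y⁻¹, x⁻¹⁆ ∈ commutator G := by
        rw [commutator_def]
        exact Subgroup.commutator_mem_commutator (Subgroup.mem_top _) (Subgroup.mem_top _)
      have heq : (x * y)⁻¹ * (y * x) = ⁅y⁻¹, x⁻¹⁆ := by
        rw [commutatorElement_def]; group
      rw [heq]; exact h hmem }

noncomputable instance (L : IntermediateField ℚ Qbar) : CommGroup (Gab L) :=
  commGroupQuotientOf (Gc L) (Subgroup.le_topologicalClosure _)

/-- the term `(w_{τ∘σ}⁻¹ τ w_σ)⁻¹ mod G_L^c` of the type transfer -/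
noncomputable def trTerm {L : IntermediateField ℚ Qbar}
    (w : (↥L →+* Qbar) → (Qbar ≃ₐ[ℚ] Qbar))
    (hw : ∀ (σ : ↥L →+* Qbar) (x : ↥L), w σ (x : Qbar) = σ x)
    (τ : Qbar ≃ₐ[ℚ] Qbar) (σ : ↥L →+* Qbar) : Gab L :=
  QuotientGroup.mk
    ((⟨(w (gact τ σ))⁻¹ * τ * w σ, conj_mem_fixingSubgroup w hw τ σ⟩ :
        ↥(L.fixingSubgroup))⁻¹)

/-- the type transfer `tr_{L,Ψ}(τ)`, computed with a system of lifts `w` -/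
noncomputable def typeTransfer {L : IntermediateField ℚ Qbar}
    (w : (↥L →+* Qbar) → (Qbar ≃ₐ[ℚ] Qbar))
    (hw : ∀ (σ : ↥L →+* Qbar) (x : ↥L), w σ (x : Qbar) = σ x)
    (Ψ : Finset (↥L →+* Qbar)) (τ : Qbar ≃ₐ[ℚ] Qbar) : Gab L :=
  ∏ σ ∈ Ψ, trTerm w hw τ σ

section Aux

lemma gact_mul {F : IntermediateField ℚ Qbar} (τ₁ τ₂ : Qbar ≃ₐ[ℚ] Qbar)
    (σ : ↥F →+* Qbar) : gact (τ₁ * τ₂) σ = gact τ₁ (gact τ₂ σ) :=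
  RingHom.ext fun _ => rfl

lemma gact_one {F : IntermediateField ℚ Qbar} (σ : ↥F →+* Qbar) :
    gact (1 : Qbar ≃ₐ[ℚ] Qbar) σ = σ :=
  RingHom.ext fun _ => rfl

lemma gact_inv_gact {F : IntermediateField ℚ Qbar} (τ : Qbar ≃ₐ[ℚ] Qbar)
    (σ : ↥F →+* Qbar) : gact τ⁻¹ (gact τ σ) = σ := by
  rw [← gact_mul, inv_mul_cancel, gact_one]

lemma gact_gact_inv {F : IntermediateField ℚ Qbar} (τ : Qbar ≃ₐ[ℚ] Qbar)
    (σ : ↥F →+* Qbar) : gact τ (gact τ⁻¹ σ) = σ := by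
  rw [← gact_mul, mul_inv_cancel, gact_one]

lemma gact_injective {F : IntermediateField ℚ Qbar} (τ : Qbar ≃ₐ[ℚ] Qbar) :
    Function.Injective (gact (F := F) τ) := fun σ σ' h => by
  have := congrArg (gact τ⁻¹) h
  rwa [gact_inv_gact, gact_inv_gact] at this

lemma gact_surjective {F : IntermediateField ℚ Qbar} (τ : Qbar ≃ₐ[ℚ] Qbar) :
    Function.Surjective (gact (F := F) τ) := fun σ =>
  ⟨gact τ⁻¹ σ, gact_gact_inv τ σ⟩

lemma trTerm_cocycle {L : IntermediateField ℚ Qbar}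
    (w : (↥L →+* Qbar) → (Qbar ≃ₐ[ℚ] Qbar))
    (hw : ∀ (σ : ↥L →+* Qbar) (x : ↥L), w σ (x : Qbar) = σ x)
    (τ₁ τ₂ : Qbar ≃ₐ[ℚ] Qbar) (σ : ↥L →+* Qbar) :
    trTerm w hw (τ₁ * τ₂) σ = trTerm w hw τ₁ (gact τ₂ σ) * trTerm w hw τ₂ σ := by
  set a : ↥(L.fixingSubgroup) :=
    ⟨(w (gact τ₁ (gact τ₂ σ)))⁻¹ * τ₁ * w (gact τ₂ σ),
      conj_mem_fixingSubgroup w hw τ₁ (gact τ₂ σ)⟩ with ha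
  set b : ↥(L.fixingSubgroup) :=
    ⟨(w (gact τ₂ σ))⁻¹ * τ₂ * w σ, conj_mem_fixingSubgroup w hw τ₂ σ⟩ with hb
  have hab : (⟨(w (gact (τ₁ * τ₂) σ))⁻¹ * (τ₁ * τ₂) * w σ,
      conj_mem_fixingSubgroup w hw (τ₁ * τ₂) σ⟩ : ↥(L.fixingSubgroup)) = a * b := by
    apply Subtype.ext
    show (w (gact (τ₁ * τ₂) σ))⁻¹ * (τ₁ * τ₂) * w σ =
      ((w (gact τ₁ (gact τ₂ σ)))⁻¹ * τ₁ * w (gact τ₂ σ)) *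
        ((w (gact τ₂ σ))⁻¹ * τ₂ * w σ)
    rw [gact_mul]
    group
  show QuotientGroup.mk _ = _
  rw [hab, mul_inv_rev]
  have : (QuotientGroup.mk (b⁻¹ * a⁻¹) : Gab L) =
      QuotientGroup.mk b⁻¹ * QuotientGroup.mk a⁻¹ := rfl
  rw [this]
  exact mul_comm (G := Gab L) _ _

end Aux

set_option synthInstance.maxHeartbeats 1000000 in
set_option maxHeartbeats 2000000 in
theorem statement3
    (Qbar : Type*) [Field Qbar] [Algebra ℚ Qbar] [IsAlgClosure ℚ Qbar]
    -- complex conjugation on `ℚ̄`, via an embedding of `ℚ̄` into `ℂ`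
    (emb : Qbar →+* ℂ) (c : Qbar ≃ₐ[ℚ] Qbar)
    (hc : ∀ x : Qbar, emb (c x) = (starRingEnd ℂ) (emb x))
    (L : IntermediateField ℚ Qbar) [FiniteDimensional ℚ L]
    (hLim : TotallyImaginary c L)
    (K : IntermediateField ℚ Qbar) (hKL : K ≤ L)
    (hK : IsCMField c K)
    (ΦK : Set (↥K →+* Qbar)) (hΦK : IsCMType c ΦK)
    (Φ : Finset (↥L →+* Qbar)) (hΦ : (↑Φ : Set (↥L →+* Qbar)) = liftType hKL ΦK)
    -- a system of lifts, used to compute the type transfer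
    (w : (↥L →+* Qbar) → (Qbar ≃ₐ[ℚ] Qbar)) (hw : IsLiftSystem c L w)
    (τ τ₁ τ₂ : Qbar ≃ₐ[ℚ] Qbar) :
    -- `τΦ_K` is a CM-type of `K` and `τΦ` is its lift, so `τΦ` is a lifted CM-type
    (IsCMType c (gact τ '' ΦK) ∧
      (↑(Φ.image (gact τ)) : Set (↥L →+* Qbar)) = liftType hKL (gact τ '' ΦK) ∧
      IsLiftedCMType c L ↑(Φ.image (gact τ))) ∧
    -- the cocycle relation
    typeTransfer w hw.1 Φ (τ₁ * τ₂) =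
      typeTransfer w hw.1 (Φ.image (gact τ₂)) τ₁ * typeTransfer w hw.1 Φ τ₂ := by
  obtain ⟨cK, hne, hcK⟩ := hK
  -- gact c on embeddings of K is right-composition with cK
  have hgc : ∀ σ : ↥K →+* Qbar, gact c σ = σ.comp (cK : ↥K →+* ↥K) :=
    fun σ => RingHom.ext fun x => ((hcK σ x)).symm
  have hcomm : ∀ σ : ↥K →+* Qbar, gact c (gact τ σ) = gact τ (gact c σ) := by
    intro σ
    rw [hgc (gact τ σ), hgc σ]
    exact RingHom.ext fun _ => rfl
  have himg : gact c '' (gact τ '' ΦK) = gact τ '' (gact c '' ΦK) := by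
    have h : (gact c ∘ gact (F := K) τ) = gact τ ∘ gact c := funext hcomm
    rw [← Set.image_comp, ← Set.image_comp, h]
  have hCMtype : IsCMType c (gact τ '' ΦK) := by
    constructor
    · rw [himg, ← Set.image_inter (gact_injective τ), hΦK.1, Set.image_empty]
    · rw [himg, ← Set.image_union, hΦK.2,
        Set.image_univ_of_surjective (gact_surjective τ)]
  have hcompincl : ∀ (τ' : Qbar ≃ₐ[ℚ] Qbar) (ρ : ↥L →+* Qbar),
      (gact τ' ρ).comp (incl hKL) = gact τ' (ρ.comp (incl hKL)) :=
    fun τ' ρ => RingHom.ext fun _ => rfl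
  have hlift : (↑(Φ.image (gact τ)) : Set (↥L →+* Qbar)) =
      liftType hKL (gact τ '' ΦK) := by
    rw [Finset.coe_image, hΦ]
    ext σ
    constructor
    · rintro ⟨ρ, hρ, rfl⟩
      exact ⟨ρ.comp (incl hKL), hρ, (hcompincl τ ρ).symm⟩
    · rintro ⟨ψ, hψ, hψ2⟩
      refine ⟨gact τ⁻¹ σ, ?_, gact_gact_inv τ σ⟩
      show (gact τ⁻¹ σ).comp (incl hKL) ∈ ΦK
      rw [hcompincl, ← hψ2, gact_inv_gact]
      exact hψ
  refine ⟨⟨hCMtype, hlift, K, hKL, gact τ '' ΦK, ⟨cK, hne, hcK⟩, hCMtype, hlift⟩, ?_⟩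
  · -- cocycle relation
    unfold typeTransfer
    have h1 : ∏ σ ∈ Φ.image (gact τ₂), trTerm w hw.1 τ₁ σ =
        ∏ σ ∈ Φ, trTerm w hw.1 τ₁ (gact τ₂ σ) :=
      Finset.prod_image fun x _ y _ h => gact_injective τ₂ h
    rw [h1]; refine Eq.trans ?_ Finset.prod_mul_distrib
    exact Finset.prod_congr rfl fun σ _ => trTerm_cocycle w hw.1 τ₁ τ₂ σ
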